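/- Fix real numbers s₃ ∈ [0,1/8] and ρ ∈ [0,1/2] and non-negative integers k and ℓ with k+ℓ ≥ 1. Call a triple of vectors r ∈ ℝᵏ, a ∈ ℝˡ, b ∈ ℝˡ feasible if 0 ≤ rᵢ ≤ ρ for all i ∈ [k], aᵢ ≥ 0 for all i ∈ [ℓ], ρ + Σᵢ rᵢ + 2Σᵢ aᵢ = 1/2, and ρ³ + Σᵢ rᵢ³ + 2Σᵢ (aᵢ³ − 3aᵢbᵢ²) = s₃; and let F(r,a,b) = ρ⁴ + Σᵢ rᵢ⁴ + 2Σᵢ (aᵢ⁴ − 6aᵢ²bᵢ² + bᵢ⁴). Suppose (r,a,b) is feasible and F(r,a,b) ≤ F(r',a',b') for every feasible triple (r',a',b'). Then at least one of the following holds: (1) there exist positive reals r' and r'' such that every rᵢ ∈ {0, r', r'', ρ} and every pair (aᵢ,bᵢ) ∈ {(0,0), (r',0), (r'',0)}; or (2) there exist reals a' and b' with b' ≠ 0 such that every rᵢ ∈ {0, ρ} and every pair (aᵢ,bᵢ) ∈ {(0,0), (a',b'), (a',−b')}. -/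

import Mathlib

/-- Feasibility for the optimization problem SPECTRUM. -/
def SpectrumFeasible (s₃ ρ : ℝ) {k l : ℕ}
    (r : Fin k → ℝ) (a b : Fin l → ℝ) : Prop :=
  (∀ i, 0 ≤ r i ∧ r i ≤ ρ) ∧ (∀ i, 0 ≤ a i) ∧
  (ρ + ∑ i, r i + 2 * ∑ i, a i = 1/2) ∧
  (ρ ^ 3 + ∑ i, (r i) ^ 3 + 2 * ∑ i, ((a i) ^ 3 - 3 * a i * (b i) ^ 2) = s₃)

/-- Objective function of the optimization problem SPECTRUM. -/
def SpectrumObj (ρ : ℝ) {k l : ℕ} (r : Fin k → ℝ) (a b : Fin l → ℝ) : ℝ :=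
  ρ ^ 4 + ∑ i, (r i) ^ 4 + 2 * ∑ i, ((a i) ^ 4 - 6 * (a i) ^ 2 * (b i) ^ 2 + (b i) ^ 4)

/-!
Read a pair `(aⱼ, bⱼ)` as the conjugate eigenvalues `aⱼ ± bⱼ i`: the problem prescribes the first
and third power sums of the spectrum `{ρ, rᵢ, aⱼ ± bⱼ i}` and minimises the fourth. Perturbing only
the coordinates that lie strictly inside their constraints, the Lagrange multiplier rule (in Fritz
John form) gives a nonzero triple `(c₁, c₃, c₄)` such that every free eigenvalue (an `rᵢ ∈ (0, ρ)`,
or `aⱼ + bⱼ i` with `aⱼ > 0`) is a root of `c₁ + 3 c₃ z² + 4 c₄ z³`, the derivative of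
`c₁ z + c₃ z³ + c₄ z⁴`. This polynomial has no linear term, so any three distinct roots `p, q, s`
satisfy `pq + ps + qs = 0`. Hence it has at most two positive roots, and once it has a non-real
root `z` with `Re z > 0`, every root with `Re ≥ 0` is `z` or `z̄`. Finally `aⱼ = 0` forces `bⱼ = 0`:
replacing `bⱼ` by `0` keeps the constraints and lowers the objective by `2 bⱼ⁴`.
-/

open Complex ComplexConjugate Filter Topology Set

theorem IsLocalMinOn.exists_multipliers_lineDeriv {ι E : Type*} [Fintype ι]
    [NormedAddCommGroup E] [NormedSpace ℝ E] [CompleteSpace E]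
    {f : ι → E → ℝ} {φ : E → ℝ} {x₀ : E}
    (hmin : IsLocalMinOn φ {x | ∀ i, f i x = f i x₀} x₀)
    (hf : ∀ i, ContDiffAt ℝ 1 (f i) x₀) (hφ : ContDiffAt ℝ 1 φ x₀) :
    ∃ (Λ : ι → ℝ) (Λ₀ : ℝ), (Λ, Λ₀) ≠ 0 ∧
      ∀ v, ∑ i, Λ i * lineDeriv ℝ (f i) x₀ v + Λ₀ * lineDeriv ℝ φ x₀ v = 0 := by
  obtain ⟨Λ, Λ₀, hΛ, hsum⟩ := IsLocalExtrOn.exists_multipliers_of_hasStrictFDerivAt (Or.inl hmin)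
    (fun i => (hf i).hasStrictFDerivAt one_ne_zero) (hφ.hasStrictFDerivAt one_ne_zero)
  refine ⟨Λ, Λ₀, hΛ, fun v => ?_⟩
  simpa [((hf _).differentiableAt one_ne_zero).lineDeriv_eq_fderiv,
    (hφ.differentiableAt one_ne_zero).lineDeriv_eq_fderiv] using congrArg (· v) hsum

theorem re_pow_three (z : ℂ) : (z ^ 3).re = z.re ^ 3 - 3 * z.re * z.im ^ 2 := by
  simp only [pow_succ, pow_zero, one_mul, mul_re, mul_im]
  ring

theorem re_pow_four (z : ℂ) : (z ^ 4).re = z.re ^ 4 - 6 * z.re ^ 2 * z.im ^ 2 + z.im ^ 4 := by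
  simp only [pow_succ, pow_zero, one_mul, mul_re, mul_im]
  ring

theorem eq_or_eq_or_mem_Ioo {x ρ : ℝ} (h₀ : 0 ≤ x) (hρ : x ≤ ρ) : x = 0 ∨ x = ρ ∨ x ∈ Ioo 0 ρ := by
  rcases h₀.eq_or_lt with h | h
  · exact .inl h.symm
  rcases hρ.eq_or_lt with h' | h'
  · exact .inr (.inl h')
  · exact .inr (.inr ⟨h, h'⟩)

abbrev SpectrumConfig (k l : ℕ) := (Fin k → ℝ) × (Fin l → ℂ)

section SpectrumConfig

variable {k l : ℕ}

def spectrumPowerSum (ρ : ℝ) (n : ℕ) (x : SpectrumConfig k l) : ℝ :=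
  ρ ^ n + ∑ i, x.1 i ^ n + 2 * ∑ j, (x.2 j ^ n).re

theorem contDiff_spectrumPowerSum (ρ : ℝ) (n : ℕ) :
    ContDiff ℝ 1 (spectrumPowerSum ρ n : SpectrumConfig k l → ℝ) := by
  have hre : ContDiff ℝ 1 Complex.re := reCLM.contDiff
  unfold spectrumPowerSum
  fun_prop

theorem hasLineDerivAt_spectrumPowerSum (ρ : ℝ) (n : ℕ) (x v : SpectrumConfig k l) :
    HasLineDerivAt ℝ (spectrumPowerSum ρ n)
      (∑ i, n * x.1 i ^ (n - 1) * v.1 i + 2 * ∑ j, (n * x.2 j ^ (n - 1) * v.2 j).re) x v := by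
  have hr : ∀ i ∈ Finset.univ, HasDerivAt (fun t : ℝ => (x.1 i + t * v.1 i) ^ n)
      (n * x.1 i ^ (n - 1) * v.1 i) 0 := fun i _ => by
    simpa using (((hasDerivAt_id (0:ℝ)).mul_const (v.1 i)).const_add (x.1 i)).fun_pow n
  have hz : ∀ j ∈ Finset.univ, HasDerivAt (fun t : ℝ => ((x.2 j + t * v.2 j) ^ n).re)
      (n * x.2 j ^ (n - 1) * v.2 j).re 0 := fun j _ => by
    simpa using
      ((((hasDerivAt_id (0:ℂ)).mul_const (v.2 j)).const_add (x.2 j)).fun_pow n).real_of_complex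
  have h := ((HasDerivAt.fun_sum hr).const_add (ρ ^ n)).add ((HasDerivAt.fun_sum hz).const_mul 2)
  unfold HasLineDerivAt spectrumPowerSum
  convert h using 1
  ext t
  simp [Complex.real_smul]

noncomputable def freeShift (ρ : ℝ) (x e : SpectrumConfig k l) : SpectrumConfig k l :=
  (fun i => x.1 i + (if x.1 i ∈ Ioo 0 ρ then 1 else 0) * e.1 i,
   fun j => x.2 j + (if 0 < (x.2 j).re then 1 else 0) * e.2 j)

theorem contDiff_freeShift (ρ : ℝ) (x : SpectrumConfig k l) :
    ContDiff ℝ 1 (freeShift ρ x) := by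
  unfold freeShift
  fun_prop

theorem freeShift_zero (ρ : ℝ) (x : SpectrumConfig k l) : freeShift ρ x 0 = x := by
  simp [freeShift]

theorem freeShift_smul {ρ : ℝ} {x v : SpectrumConfig k l}
    (hv₁ : ∀ i, x.1 i ∉ Ioo 0 ρ → v.1 i = 0) (hv₂ : ∀ j, ¬ 0 < (x.2 j).re → v.2 j = 0) (t : ℝ) :
    freeShift ρ x (t • v) = x + t • v := by
  ext i
  · by_cases h : x.1 i ∈ Ioo 0 ρ
    · simp only [freeShift, if_pos h]
      simp
    · simp [freeShift, hv₁ i h]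
  · by_cases h : 0 < (x.2 i).re
    · simp [freeShift, h]
    · simp [freeShift, hv₂ i h]

theorem eventually_box_freeShift {ρ : ℝ} {x : SpectrumConfig k l}
    (hr : ∀ i, 0 ≤ x.1 i ∧ x.1 i ≤ ρ) (hz : ∀ j, 0 ≤ (x.2 j).re) :
    ∀ᶠ e in 𝓝 0, (∀ i, 0 ≤ (freeShift ρ x e).1 i ∧ (freeShift ρ x e).1 i ≤ ρ) ∧
      ∀ j, 0 ≤ ((freeShift ρ x e).2 j).re := by
  refine (eventually_all.2 fun i => ?_).and (eventually_all.2 fun j => ?_)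
  · by_cases h : x.1 i ∈ Ioo 0 ρ
    · have hc : ContinuousAt (fun e : SpectrumConfig k l => x.1 i + e.1 i) 0 := by fun_prop
      filter_upwards [hc.eventually_mem (by simpa using Ioo_mem_nhds h.1 h.2)] with e he
      simp only [freeShift, if_pos h, one_mul]
      exact ⟨he.1.le, he.2.le⟩
    · simp only [freeShift, if_neg h, zero_mul, add_zero]
      exact .of_forall fun _ => hr i
  · by_cases h : 0 < (x.2 j).re
    · have hc : ContinuousAt (fun e : SpectrumConfig k l => (x.2 j + e.2 j).re) 0 := by
        have hre : Continuous Complex.re := continuous_re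
        fun_prop
      filter_upwards [hc.eventually_mem (by simpa using Ioi_mem_nhds h)] with e he
      simp only [freeShift, if_pos h, one_mul]
      exact (mem_Ioi.1 he).le
    · simp only [freeShift, if_neg h, zero_mul, add_zero]
      exact .of_forall fun _ => hz j

theorem lineDeriv_comp_freeShift {ρ : ℝ} {x v : SpectrumConfig k l}
    (hv₁ : ∀ i, x.1 i ∉ Ioo 0 ρ → v.1 i = 0) (hv₂ : ∀ j, ¬ 0 < (x.2 j).re → v.2 j = 0) (n : ℕ) :
    lineDeriv ℝ (spectrumPowerSum ρ n ∘ freeShift ρ x) 0 v =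
      ∑ i, n * x.1 i ^ (n - 1) * v.1 i + 2 * ∑ j, (n * x.2 j ^ (n - 1) * v.2 j).re := by
  apply HasLineDerivAt.lineDeriv
  have := hasLineDerivAt_spectrumPowerSum ρ n x v
  unfold HasLineDerivAt at this ⊢
  simpa [Function.comp_def, freeShift_smul hv₁ hv₂] using this

theorem lineDeriv_comp_freeShift_single_fst {ρ : ℝ} {x : SpectrumConfig k l} {i : Fin k}
    (hi : x.1 i ∈ Ioo 0 ρ) (n : ℕ) :
    lineDeriv ℝ (spectrumPowerSum ρ n ∘ freeShift ρ x) 0 ((Pi.single i 1, 0) : SpectrumConfig k l) =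
      n * x.1 i ^ (n - 1) := by
  rw [lineDeriv_comp_freeShift (fun i' hi' => Pi.single_eq_of_ne (by rintro rfl; exact hi' hi) _)
    (fun _ _ => rfl)]
  simp [Pi.single_apply]

theorem lineDeriv_comp_freeShift_single_snd {ρ : ℝ} {x : SpectrumConfig k l} {j : Fin l}
    (hj : 0 < (x.2 j).re) (w : ℂ) (n : ℕ) :
    lineDeriv ℝ (spectrumPowerSum ρ n ∘ freeShift ρ x) 0 ((0, Pi.single j w) : SpectrumConfig k l) =
      2 * (n * x.2 j ^ (n - 1) * w).re := by
  rw [lineDeriv_comp_freeShift (fun _ _ => rfl)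
    (fun j' hj' => Pi.single_eq_of_ne (by rintro rfl; exact hj' hj) _)]
  simp [Pi.single_apply, apply_ite Complex.re]

def spectrumConfig (r : Fin k → ℝ) (a b : Fin l → ℝ) : SpectrumConfig k l :=
  (r, fun j => ⟨a j, b j⟩)

theorem spectrumObj_eq_spectrumPowerSum (ρ : ℝ) (x : SpectrumConfig k l) :
    SpectrumObj ρ x.1 (fun j => (x.2 j).re) (fun j => (x.2 j).im) = spectrumPowerSum ρ 4 x := by
  simp [SpectrumObj, spectrumPowerSum, re_pow_four]

theorem spectrumFeasible_iff (s₃ ρ : ℝ) (x : SpectrumConfig k l) :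
    SpectrumFeasible s₃ ρ x.1 (fun j => (x.2 j).re) (fun j => (x.2 j).im) ↔
      (∀ i, 0 ≤ x.1 i ∧ x.1 i ≤ ρ) ∧ (∀ j, 0 ≤ (x.2 j).re) ∧
        spectrumPowerSum ρ 1 x = 1 / 2 ∧ spectrumPowerSum ρ 3 x = s₃ := by
  simp [SpectrumFeasible, spectrumPowerSum, re_pow_three]

end SpectrumConfig

def lagrangianDeriv (c₁ c₃ c₄ : ℝ) (z : ℂ) : ℂ := c₁ + 3 * c₃ * z ^ 2 + 4 * c₄ * z ^ 3

theorem lagrangianDeriv_conj (c₁ c₃ c₄ : ℝ) (z : ℂ) :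
    lagrangianDeriv c₁ c₃ c₄ (conj z) = conj (lagrangianDeriv c₁ c₃ c₄ z) := by
  simp [lagrangianDeriv, map_ofNat]

theorem mul_add_mul_add_mul_eq_zero_of_lagrangianDeriv {c₁ c₃ c₄ : ℝ} (hc : (c₁, c₃, c₄) ≠ 0)
    {p q s : ℂ} (hpq : p ≠ q) (hps : p ≠ s) (hqs : q ≠ s) (hp : lagrangianDeriv c₁ c₃ c₄ p = 0)
    (hq : lagrangianDeriv c₁ c₃ c₄ q = 0) (hs : lagrangianDeriv c₁ c₃ c₄ s = 0) :
    p * q + p * s + q * s = 0 := by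
  unfold lagrangianDeriv at hp hq hs
  have hpq' : 3 * c₃ * (p + q) + 4 * c₄ * (p ^ 2 + p * q + q ^ 2) = 0 :=
    mul_left_cancel₀ (sub_ne_zero.2 hpq) (by linear_combination hp - hq)
  have hps' : 3 * c₃ * (p + s) + 4 * c₄ * (p ^ 2 + p * s + s ^ 2) = 0 :=
    mul_left_cancel₀ (sub_ne_zero.2 hps) (by linear_combination hp - hs)
  have hsum : 3 * c₃ + 4 * c₄ * (p + q + s) = 0 :=
    mul_left_cancel₀ (sub_ne_zero.2 hqs) (by linear_combination hpq' - hps')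
  have h₄ : (c₄ : ℂ) * (p * q + p * s + q * s) = 0 := by
    linear_combination (-1 / 4 : ℂ) * hpq' + (1 / 4 : ℂ) * (p + q) * hsum
  refine (mul_eq_zero.1 h₄).resolve_left fun h₄ => hc ?_
  have h₃ : (c₃ : ℂ) = 0 := by linear_combination hsum / 3 - 4 / 3 * (p + q + s) * h₄
  have h₁ : (c₁ : ℂ) = 0 := by linear_combination hp - 3 * p ^ 2 * h₃ - 4 * p ^ 3 * h₄
  simp only [Prod.mk_eq_zero]
  exact ⟨by exact_mod_cast h₁, by exact_mod_cast h₃, by exact_mod_cast h₄⟩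

theorem eq_or_eq_conj_of_lagrangianDeriv_eq_zero {c₁ c₃ c₄ : ℝ} (hc : (c₁, c₃, c₄) ≠ 0) {z w : ℂ}
    (hz : lagrangianDeriv c₁ c₃ c₄ z = 0) (hre : 0 < z.re) (him : z.im ≠ 0)
    (hw : lagrangianDeriv c₁ c₃ c₄ w = 0) (hwre : 0 ≤ w.re) : w = z ∨ w = conj z := by
  by_contra! hne
  have hzz : z ≠ conj z := fun h => him (conj_eq_iff_im.1 h.symm)
  have he := congrArg re (mul_add_mul_add_mul_eq_zero_of_lagrangianDeriv hc hzz
    (Ne.symm hne.1) (Ne.symm hne.2) hz (by rw [lagrangianDeriv_conj, hz, map_zero]) hw)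
  simp only [add_re, mul_re, conj_re, conj_im, zero_re] at he
  nlinarith [sq_pos_of_ne_zero him, mul_nonneg hre.le hwre]

theorem exists_pos_roots_subset_pair {c₁ c₃ c₄ : ℝ} (hc : (c₁, c₃, c₄) ≠ 0) :
    ∃ r₁ r₂ : ℝ, 0 < r₁ ∧ 0 < r₂ ∧
      ∀ x : ℝ, 0 < x → lagrangianDeriv c₁ c₃ c₄ x = 0 → x = r₁ ∨ x = r₂ := by
  by_cases h₁ : ∃ x : ℝ, 0 < x ∧ lagrangianDeriv c₁ c₃ c₄ x = 0
  · obtain ⟨x, hx, hLx⟩ := h₁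
    by_cases h₂ : ∃ y : ℝ, 0 < y ∧ lagrangianDeriv c₁ c₃ c₄ y = 0 ∧ y ≠ x
    · obtain ⟨y, hy, hLy, hyx⟩ := h₂
      refine ⟨x, y, hx, hy, fun w hw hLw => ?_⟩
      by_contra! hne
      have he := mul_add_mul_add_mul_eq_zero_of_lagrangianDeriv hc (by exact_mod_cast hyx.symm)
        (by exact_mod_cast hne.1.symm) (by exact_mod_cast hne.2.symm) hLx hLy hLw
      have he' : x * y + x * w + y * w = 0 := by exact_mod_cast he
      nlinarith [mul_pos hx hy, mul_pos hx hw, mul_pos hy hw]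
    · push Not at h₂
      exact ⟨x, x, hx, hx, fun w hw hLw => .inl (h₂ w hw hLw)⟩
  · push Not at h₁
    exact ⟨1, 1, one_pos, one_pos, fun w hw hLw => absurd hLw (h₁ w hw)⟩

def IsSpectrumMinimizer (s₃ ρ : ℝ) {k l : ℕ} (r : Fin k → ℝ) (a b : Fin l → ℝ) : Prop :=
  SpectrumFeasible s₃ ρ r a b ∧ ∀ (r' : Fin k → ℝ) (a' b' : Fin l → ℝ),
    SpectrumFeasible s₃ ρ r' a' b' → SpectrumObj ρ r a b ≤ SpectrumObj ρ r' a' b'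

namespace IsSpectrumMinimizer

variable {s₃ ρ : ℝ} {k l : ℕ} {r : Fin k → ℝ} {a b : Fin l → ℝ}

theorem b_eq_zero_of_a_eq_zero (h : IsSpectrumMinimizer s₃ ρ r a b) {j : Fin l} (hj : a j = 0) :
    b j = 0 := by
  by_contra hbj
  set b' : Fin l → ℝ := fun j' => if a j' = 0 then 0 else b j'
  have hcubic : ∀ j', a j' ^ 3 - 3 * a j' * b' j' ^ 2 = a j' ^ 3 - 3 * a j' * b j' ^ 2 := by
    intro j'
    by_cases h0 : a j' = 0 <;> simp [b', h0]
  have hfeas : SpectrumFeasible s₃ ρ r a b' := by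
    obtain ⟨hr, ha, h₁, h₃⟩ := h.1
    exact ⟨hr, ha, h₁, by simpa only [hcubic] using h₃⟩
  have hquartic : ∀ j', a j' ^ 4 - 6 * a j' ^ 2 * b' j' ^ 2 + b' j' ^ 4 ≤
      a j' ^ 4 - 6 * a j' ^ 2 * b j' ^ 2 + b j' ^ 4 := by
    intro j'
    by_cases h0 : a j' = 0
    · simp only [b', if_pos h0, h0]
      ring_nf
      positivity
    · simp only [b', if_neg h0, le_refl]
  have hlt : SpectrumObj ρ r a b' < SpectrumObj ρ r a b := by
    have := Finset.sum_lt_sum (fun j' _ => hquartic j')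
      ⟨j, Finset.mem_univ _, by simp only [b', if_pos hj, hj]; ring_nf; positivity⟩
    unfold SpectrumObj
    linarith
  exact (h.2 _ _ _ hfeas).not_gt hlt

theorem isLocalMinOn_freeShift (h : IsSpectrumMinimizer s₃ ρ r a b) :
    IsLocalMinOn (spectrumPowerSum ρ 4 ∘ freeShift ρ (spectrumConfig r a b))
      {e | ∀ m : Fin 2, (spectrumPowerSum ρ (![1, 3] m) ∘ freeShift ρ (spectrumConfig r a b)) e =
        (spectrumPowerSum ρ (![1, 3] m) ∘ freeShift ρ (spectrumConfig r a b)) 0} 0 := by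
  obtain ⟨hbox, hre, h₁, h₃⟩ := (spectrumFeasible_iff s₃ ρ (spectrumConfig r a b)).1 h.1
  rw [IsLocalMinOn, IsMinFilter, eventually_nhdsWithin_iff]
  filter_upwards [eventually_box_freeShift hbox hre] with e ⟨hbox', hre'⟩ hlevel
  have hfeas := (spectrumFeasible_iff s₃ ρ (freeShift ρ (spectrumConfig r a b) e)).2
    ⟨hbox', hre', by simpa [freeShift_zero, h₁] using hlevel 0,
      by simpa [freeShift_zero, h₃] using hlevel 1⟩
  rw [Function.comp_apply, Function.comp_apply, freeShift_zero, ← spectrumObj_eq_spectrumPowerSum,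
    ← spectrumObj_eq_spectrumPowerSum]
  exact h.2 _ _ _ hfeas

theorem exists_lagrangianDeriv_eq_zero (h : IsSpectrumMinimizer s₃ ρ r a b) :
    ∃ c₁ c₃ c₄ : ℝ, (c₁, c₃, c₄) ≠ 0 ∧
      (∀ i, r i ∈ Ioo 0 ρ → lagrangianDeriv c₁ c₃ c₄ (r i) = 0) ∧
      ∀ j, 0 < a j → lagrangianDeriv c₁ c₃ c₄ ⟨a j, b j⟩ = 0 := by
  have hC : ∀ n, ContDiffAt ℝ 1 (spectrumPowerSum ρ n ∘ freeShift ρ (spectrumConfig r a b)) 0 :=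
    fun n => ((contDiff_spectrumPowerSum ρ n).comp (contDiff_freeShift ρ _)).contDiffAt
  obtain ⟨Λ, Λ₀, hΛ, hstat⟩ :=
    h.isLocalMinOn_freeShift.exists_multipliers_lineDeriv (fun _ => hC _) (hC 4)
  refine ⟨Λ 0, Λ 1, Λ₀, ?_, fun i hi => ?_, fun j hj => ?_⟩
  · contrapose! hΛ
    simp only [Prod.mk_eq_zero] at hΛ ⊢
    exact ⟨funext (Fin.forall_fin_two.2 ⟨hΛ.1, hΛ.2.1⟩), hΛ.2.2⟩
  · have hv := hstat (Pi.single i 1, 0)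
    simp only [Fin.sum_univ_two, lineDeriv_comp_freeShift_single_fst (x := spectrumConfig r a b) hi,
      Matrix.cons_val_zero, Matrix.cons_val_one] at hv
    norm_num only [spectrumConfig, pow_zero, mul_one] at hv
    simp only [lagrangianDeriv]
    exact_mod_cast (by linear_combination hv : Λ 0 + 3 * Λ 1 * r i ^ 2 + 4 * Λ₀ * r i ^ 3 = 0)
  · have hw : ∀ w : ℂ, (lagrangianDeriv (Λ 0) (Λ 1) Λ₀ ⟨a j, b j⟩ * w).re = 0 := by
      intro w
      have hv := hstat (0, Pi.single j w)
      simp only [Fin.sum_univ_two,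
        lineDeriv_comp_freeShift_single_snd (x := spectrumConfig r a b) hj,
        Matrix.cons_val_zero, Matrix.cons_val_one] at hv
      norm_num only [spectrumConfig, pow_zero, mul_one, one_mul] at hv
      have hL : lagrangianDeriv (Λ 0) (Λ 1) Λ₀ ⟨a j, b j⟩ * w = Λ 0 * w +
          Λ 1 * (3 * ⟨a j, b j⟩ ^ 2 * w) + Λ₀ * (4 * ⟨a j, b j⟩ ^ 3 * w) := by
        unfold lagrangianDeriv
        ring
      rw [hL]
      simp only [add_re, re_ofReal_mul]
      linear_combination hv / 2
    apply Complex.ext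
    · simpa using hw 1
    · simpa using hw I

theorem exists_of_forall_b_eq_zero (h : IsSpectrumMinimizer s₃ ρ r a b) (hb : ∀ j, b j = 0) :
    ∃ r' r'' : ℝ, 0 < r' ∧ 0 < r'' ∧ (∀ i, r i ∈ ({0, r', r'', ρ} : Set ℝ)) ∧
      ∀ j, (a j, b j) ∈ ({(0, 0), (r', 0), (r'', 0)} : Set (ℝ × ℝ)) := by
  obtain ⟨c₁, c₃, c₄, hc, hr, hab⟩ := h.exists_lagrangianDeriv_eq_zero
  obtain ⟨r₁, r₂, h₁, h₂, hroots⟩ := exists_pos_roots_subset_pair hc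
  refine ⟨r₁, r₂, h₁, h₂, fun i => ?_, fun j => ?_⟩
  · rcases eq_or_eq_or_mem_Ioo (h.1.1 i).1 (h.1.1 i).2 with hi | hi | hi
    · simp [hi]
    · simp [hi]
    · rcases hroots (r i) hi.1 (hr i hi) with h' | h' <;> simp [h']
  · rcases (h.1.2.1 j).eq_or_lt with hj | hj
    · simp [← hj, hb j]
    · have hL := hab j hj
      rw [hb j] at hL
      rcases hroots (a j) hj hL with h' | h' <;> simp [h', hb j]

theorem exists_of_b_ne_zero (h : IsSpectrumMinimizer s₃ ρ r a b) {j₀ : Fin l} (hj₀ : b j₀ ≠ 0) :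
    ∃ a' b' : ℝ, b' ≠ 0 ∧ (∀ i, r i ∈ ({0, ρ} : Set ℝ)) ∧
      ∀ j, (a j, b j) ∈ ({(0, 0), (a', b'), (a', -b')} : Set (ℝ × ℝ)) := by
  obtain ⟨c₁, c₃, c₄, hc, hr, hab⟩ := h.exists_lagrangianDeriv_eq_zero
  have ha₀ : 0 < a j₀ :=
    (h.1.2.1 j₀).lt_of_ne fun h0 => hj₀ (h.b_eq_zero_of_a_eq_zero h0.symm)
  have hconj : ∀ w : ℂ, lagrangianDeriv c₁ c₃ c₄ w = 0 → 0 ≤ w.re →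
      w = ⟨a j₀, b j₀⟩ ∨ w = conj ⟨a j₀, b j₀⟩ :=
    fun _ => eq_or_eq_conj_of_lagrangianDeriv_eq_zero hc (hab j₀ ha₀) ha₀ hj₀
  refine ⟨a j₀, b j₀, hj₀, fun i => ?_, fun j => ?_⟩
  · rcases eq_or_eq_or_mem_Ioo (h.1.1 i).1 (h.1.1 i).2 with hi | hi | hi
    · simp [hi]
    · simp [hi]
    · exfalso
      rcases hconj (r i) (hr i hi) hi.1.le with h' | h' <;>
        simp [Complex.ext_iff, eq_comm, hj₀] at h'
  · rcases (h.1.2.1 j).eq_or_lt with hj | hj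
    · simp [← hj, h.b_eq_zero_of_a_eq_zero hj.symm]
    · rcases hconj ⟨a j, b j⟩ (hab j hj) hj.le with h' | h' <;>
        simp_all [Complex.ext_iff]

end IsSpectrumMinimizer

theorem stmt_8_general (s₃ ρ : ℝ)
    (k l : ℕ)
    (r : Fin k → ℝ) (a b : Fin l → ℝ)
    (hfeas : SpectrumFeasible s₃ ρ r a b)
    (hopt : ∀ (r' : Fin k → ℝ) (a' b' : Fin l → ℝ),
      SpectrumFeasible s₃ ρ r' a' b' → SpectrumObj ρ r a b ≤ SpectrumObj ρ r' a' b') :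
    (∃ r' r'' : ℝ, 0 < r' ∧ 0 < r'' ∧
      (∀ i, r i ∈ ({0, r', r'', ρ} : Set ℝ)) ∧
      (∀ i, (a i, b i) ∈ ({(0, 0), (r', 0), (r'', 0)} : Set (ℝ × ℝ)))) ∨
    (∃ a' b' : ℝ, b' ≠ 0 ∧
      (∀ i, r i ∈ ({0, ρ} : Set ℝ)) ∧
      (∀ i, (a i, b i) ∈ ({(0, 0), (a', b'), (a', -b')} : Set (ℝ × ℝ)))) := by
  have h : IsSpectrumMinimizer s₃ ρ r a b := ⟨hfeas, hopt⟩
  by_cases hb : ∃ j, b j ≠ 0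
  · obtain ⟨j₀, hj₀⟩ := hb
    exact .inr (h.exists_of_b_ne_zero hj₀)
  · push Not at hb
    exact .inl (h.exists_of_forall_b_eq_zero hb)

/-- Structure of optimal solutions of the optimization problem SPECTRUM. -/
theorem stmt_8 (s₃ ρ : ℝ) (hs₃ : 0 ≤ s₃ ∧ s₃ ≤ 1/8) (hρ : 0 ≤ ρ ∧ ρ ≤ 1/2)
    (k l : ℕ) (hkl : 1 ≤ k + l)
    (r : Fin k → ℝ) (a b : Fin l → ℝ)
    (hfeas : SpectrumFeasible s₃ ρ r a b)
    (hopt : ∀ (r' : Fin k → ℝ) (a' b' : Fin l → ℝ),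
      SpectrumFeasible s₃ ρ r' a' b' → SpectrumObj ρ r a b ≤ SpectrumObj ρ r' a' b') :
    (∃ r' r'' : ℝ, 0 < r' ∧ 0 < r'' ∧
      (∀ i, r i ∈ ({0, r', r'', ρ} : Set ℝ)) ∧
      (∀ i, (a i, b i) ∈ ({(0, 0), (r', 0), (r'', 0)} : Set (ℝ × ℝ)))) ∨
    (∃ a' b' : ℝ, b' ≠ 0 ∧
      (∀ i, r i ∈ ({0, ρ} : Set ℝ)) ∧
      (∀ i, (a i, b i) ∈ ({(0, 0), (a', b'), (a', -b')} : Set (ℝ × ℝ)))) :=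
  stmt_8_general s₃ ρ k l r a b hfeas hopt
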